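/- arXiv:1308.3831 — 2 statements merged into one kernel-verified Lean document; each statement's English description precedes it below -/
import Mathlib

section
/- For every positive integer k, with r = 4k+1, the cardinality of T_r satisfies |T_r| ≥ Catalan(k)·C(4k,2k)·2^{2k}, where Catalan(k) is the k-th Catalan number (the number of classical Dyck words of length 2k) and C(4k,2k) is a binomial coefficient. -/
open Finset


/-- Weight function `ω` on the alphabet `{0,1}²`: `ω(0,0) = +1`, `ω(1,1) = −1`,
and `ω(a,b) = 0` otherwise. -/
def dyckWt (a b : Bool) : ℤ :=
  if a = false ∧ b = false then 1 else if a = true ∧ b = true then -1 else 0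

open Fin.NatCast in
/-- `T_r`: binary words `v` of length `2r+1` with exactly `r+1` ones and `r` zeros,
`v_0 = v_{2r} = 1`, `v_r = 0`, and such that the word `w_1 ⋯ w_{r−1}` over `{0,1}²`
with `w_i = (v_i, v_{i+r})` is a generalized Dyck word for the weight `dyckWt`:
every prefix sum of weights is nonnegative, and the total sum is `0`. -/
def Tset (r : ℕ) : Set (Fin (2 * r + 1) → Bool) :=
  {v | (Finset.univ.filter (fun i => v i = true)).card = r + 1 ∧
       (Finset.univ.filter (fun i => v i = false)).card = r ∧
       v ((0 : ℕ) : Fin (2 * r + 1)) = true ∧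
       v ((2 * r : ℕ) : Fin (2 * r + 1)) = true ∧
       v ((r : ℕ) : Fin (2 * r + 1)) = false ∧
       (∀ j ∈ Finset.Icc 1 (r - 1),
         0 ≤ ∑ i ∈ Finset.Icc 1 j,
           dyckWt (v ((i : ℕ) : Fin (2 * r + 1))) (v ((i + r : ℕ) : Fin (2 * r + 1)))) ∧
       ∑ i ∈ Finset.Icc 1 (r - 1),
           dyckWt (v ((i : ℕ) : Fin (2 * r + 1))) (v ((i + r : ℕ) : Fin (2 * r + 1))) = 0}


/-!
Put `n = 4k`, so `r = n + 1`. A word `v` with `v_0 = v_{2r} = 1` and `v_r = 0` is determined by its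
pair word `w = w_1 ⋯ w_n`, and since every letter `x` of `{0,1}²` carries exactly `1 - ω x` ones,
`v` has `2 + n - ∑ ω(w_i)` ones; so `v ∈ T_r` as soon as `w` is a generalized Dyck word of length
`n`. Such words arise by riffling a Dyck word of semilength `k`, written with the letters `(0,0)`
and `(1,1)`, with `2k` letters `(b, ¬b)` of weight zero: the positions of the latter can be chosen
in `C(4k,2k)` ways, their first coordinates in `2^{2k}` ways and the Dyck word in `Catalan(k)`
ways. The construction is injective because the letters `(b, ¬b)` are exactly those with distinct
coordinates.
-/

open DyckStep

section Riffle

variable {α : Type*}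

def riffle : List Bool → List α → List α → List α
  | true :: sel, x :: xs, ys => x :: riffle sel xs ys
  | false :: sel, xs, y :: ys => y :: riffle sel xs ys
  | _, _, _ => []

theorem riffle_perm {sel : List Bool} {xs ys : List α} (hx : sel.count true ≤ xs.length)
    (hy : sel.count false ≤ ys.length) :
    (riffle sel xs ys).Perm (xs.take (sel.count true) ++ ys.take (sel.count false)) := by
  induction sel generalizing xs ys with
  | nil => simp [riffle]
  | cons b sel ih =>
    cases b
    · obtain _ | ⟨y, ys⟩ := ys
      · simp at hy
      · simp only [List.count_cons_self, List.count_cons_of_ne (by decide : false ≠ true)]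
          at hx hy ⊢
        simp only [riffle, List.take_succ_cons]
        exact ((ih hx (by simpa using hy)).cons y).trans List.perm_middle.symm
    · obtain _ | ⟨x, xs⟩ := xs
      · simp at hx
      · simp only [List.count_cons_self, List.count_cons_of_ne (by decide : true ≠ false)]
          at hx hy ⊢
        simp only [riffle, List.take_succ_cons, List.cons_append]
        exact (ih (by simpa using hx) hy).cons x

theorem take_riffle (sel : List Bool) (xs ys : List α) (n : ℕ) :
    (riffle sel xs ys).take n = riffle (sel.take n) xs ys := by
  induction sel generalizing n xs ys with
  | nil => simp [riffle]
  | cons b sel ih =>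
    cases n with
    | zero => simp [riffle]
    | succ n => cases b <;> cases xs <;> cases ys <;> simp [riffle, ih]

theorem map_riffle {P : α → Bool} {sel : List Bool} {xs ys : List α}
    (hxs : ∀ x ∈ xs, P x = true) (hys : ∀ y ∈ ys, P y = false)
    (hx : sel.count true ≤ xs.length) (hy : sel.count false ≤ ys.length) :
    (riffle sel xs ys).map P = sel := by
  induction sel generalizing xs ys with
  | nil => simp [riffle]
  | cons b sel ih =>
    cases b
    · obtain _ | ⟨y, ys⟩ := ys
      · simp at hy
      · simp_all [riffle]
    · obtain _ | ⟨x, xs⟩ := xs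
      · simp at hx
      · simp_all [riffle]

theorem filter_riffle {P : α → Bool} {sel : List Bool} {xs ys : List α}
    (hxs : ∀ x ∈ xs, P x = true) (hys : ∀ y ∈ ys, P y = false)
    (hx : sel.count true ≤ xs.length) (hy : sel.count false ≤ ys.length) :
    (riffle sel xs ys).filter P = xs.take (sel.count true) := by
  induction sel generalizing xs ys with
  | nil => simp [riffle]
  | cons b sel ih =>
    cases b
    · obtain _ | ⟨y, ys⟩ := ys
      · simp at hy
      · simp_all [riffle]
    · obtain _ | ⟨x, xs⟩ := xs
      · simp at hx
      · simp_all [riffle]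

theorem filter_not_riffle {P : α → Bool} {sel : List Bool} {xs ys : List α}
    (hxs : ∀ x ∈ xs, P x = true) (hys : ∀ y ∈ ys, P y = false)
    (hx : sel.count true ≤ xs.length) (hy : sel.count false ≤ ys.length) :
    (riffle sel xs ys).filter (fun a => !P a) = ys.take (sel.count false) := by
  induction sel generalizing xs ys with
  | nil => simp [riffle]
  | cons b sel ih =>
    cases b
    · obtain _ | ⟨y, ys⟩ := ys
      · simp at hy
      · simp_all [riffle]
    · obtain _ | ⟨x, xs⟩ := xs
      · simp at hx
      · simp_all [riffle]

theorem riffle_perm_append {sel : List Bool} {xs ys : List α} (hx : sel.count true = xs.length)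
    (hy : sel.count false = ys.length) : (riffle sel xs ys).Perm (xs ++ ys) := by
  simpa only [hx, hy, List.take_length] using riffle_perm hx.le hy.le

def IsWeightedDyck (ω : α → ℤ) (w : List α) : Prop :=
  (∀ j, 0 ≤ ((w.take j).map ω).sum) ∧ (w.map ω).sum = 0

theorem sum_map_riffle {ω : α → ℤ} {sel : List Bool} {xs ys : List α}
    (hxs : ∀ x ∈ xs, ω x = 0) (hx : sel.count true ≤ xs.length)
    (hy : sel.count false ≤ ys.length) :
    ((riffle sel xs ys).map ω).sum = ((ys.take (sel.count false)).map ω).sum := by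
  have hzero : ((xs.take (sel.count true)).map ω).sum = 0 :=
    List.sum_eq_zero fun a ha => by
      obtain ⟨x, hx, rfl⟩ := List.mem_map.mp ha
      exact hxs x (List.mem_of_mem_take hx)
  rw [((riffle_perm hx hy).map ω).sum_eq, List.map_append, List.sum_append, hzero, zero_add]

theorem IsWeightedDyck.riffle {ω : α → ℤ} {sel : List Bool} {xs ys : List α}
    (hys : IsWeightedDyck ω ys) (hxs : ∀ x ∈ xs, ω x = 0)
    (hx : sel.count true = xs.length) (hy : sel.count false = ys.length) :
    IsWeightedDyck ω (riffle sel xs ys) := by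
  refine ⟨fun j => ?_, ?_⟩
  · have hsub := List.take_sublist j sel
    rw [take_riffle, sum_map_riffle hxs ((hsub.count_le _).trans hx.le)
      ((hsub.count_le _).trans hy.le)]
    exact hys.1 _
  · rw [sum_map_riffle hxs hx.le hy.le, hy, List.take_length]
    exact hys.2

end Riffle

def DyckStep.toPair : DyckStep → Bool × Bool
  | U => (false, false)
  | D => (true, true)

theorem DyckStep.toPair_injective : Function.Injective DyckStep.toPair := by
  intro d d' h
  cases d <;> cases d' <;> first | rfl | cases h

theorem sum_map_dyckWt_toPair (l : List DyckStep) :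
    ((l.map DyckStep.toPair).map (Function.uncurry dyckWt)).sum = l.count U - l.count D := by
  induction l with
  | nil => simp
  | cons d l ih =>
    rw [List.map_cons, List.map_cons, List.sum_cons, ih]
    cases d <;> grind [DyckStep.toPair, dyckWt]

theorem DyckWord.isWeightedDyck_toPair (p : DyckWord) :
    IsWeightedDyck (Function.uncurry dyckWt) (p.toList.map DyckStep.toPair) := by
  refine ⟨fun j => ?_, ?_⟩
  · rw [← List.map_take, sum_map_dyckWt_toPair, sub_nonneg]
    exact_mod_cast p.count_D_le_count_U j
  · rw [sum_map_dyckWt_toPair, p.count_U_eq_count_D, sub_self]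

theorem DyckWord.length_toList_eq {p : DyckWord} {k : ℕ} (hp : p.semilength = k) :
    p.toList.length = 2 * k := by
  rw [← p.two_mul_semilength_eq_length, hp]

def mixedPair (b : Bool) : Bool × Bool := (b, !b)

theorem mixedPair_injective : Function.Injective mixedPair := fun _ _ h => congrArg Prod.fst h

theorem dyckWt_mixedPair (b : Bool) : Function.uncurry dyckWt (mixedPair b) = 0 := by
  cases b <;> rfl

def isMixed (x : Bool × Bool) : Bool := x.1 != x.2

theorem isMixed_mixedPair (b : Bool) : isMixed (mixedPair b) = true := by
  cases b <;> rfl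

theorem isMixed_toPair (d : DyckStep) : isMixed d.toPair = false := by
  cases d <;> rfl

theorem count_true_fst_add_snd (w : List (Bool × Bool)) :
    ((w.map Prod.fst).count true + (w.map Prod.snd).count true : ℤ) =
      w.length - (w.map (Function.uncurry dyckWt)).sum := by
  induction w with
  | nil => simp
  | cons x w ih =>
    obtain ⟨a, b⟩ := x
    simp only [List.map_cons, List.count_cons, List.length_cons, List.sum_cons]
    push_cast
    cases a <;> cases b <;> grind [dyckWt]

theorem List.count_ofFn_eq_card_filter {n : ℕ} (f : Fin n → Bool) (b : Bool) :
    (List.ofFn f).count b = (Finset.univ.filter fun i => f i = b).card := by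
  rw [← Multiset.coe_count, ← Fin.univ_val_map, Multiset.count_map, Finset.card_def,
    Finset.filter_val]
  simp only [eq_comm]

def frame (w : List (Bool × Bool)) : List Bool :=
  true :: w.map Prod.fst ++ false :: w.map Prod.snd ++ [true]

theorem length_frame (w : List (Bool × Bool)) : (frame w).length = 2 * w.length + 3 := by
  simp only [frame, List.length_append, List.length_cons, List.length_map, List.length_nil]
  ring

theorem frame_injective : Function.Injective frame := by
  intro w w' h
  have hlen : w.length = w'.length := by
    have := congrArg List.length h
    simp only [length_frame] at this
    omega
  obtain ⟨h, -⟩ := List.append_inj' h rfl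
  obtain ⟨hfst, hsnd⟩ := List.append_inj h (by simp [hlen])
  rw [List.cons_inj_right] at hfst hsnd
  rw [← List.zip_unzip w, ← List.zip_unzip w', List.unzip_fst, List.unzip_snd, List.unzip_fst,
    List.unzip_snd, hfst, hsnd]

def frameVec (n : ℕ) (w : List (Bool × Bool)) : Fin (2 * (n + 1) + 1) → Bool :=
  fun i => (frame w).getD i false

theorem ofFn_frameVec {n : ℕ} {w : List (Bool × Bool)} (hw : w.length = n) :
    List.ofFn (frameVec n w) = frame w := by
  refine List.ext_getElem (by simp [length_frame, hw]) fun i h _ => ?_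
  rw [List.getElem_ofFn, frameVec, List.getD_eq_getElem]

theorem eq_of_frameVec_eq {n : ℕ} {w w' : List (Bool × Bool)} (hw : w.length = n)
    (hw' : w'.length = n) (h : frameVec n w = frameVec n w') : w = w' :=
  frame_injective <| by rw [← ofFn_frameVec hw, ← ofFn_frameVec hw', h]

open Fin.NatCast in
theorem frameVec_natCast {n : ℕ} (w : List (Bool × Bool)) {i : ℕ} (hi : i < 2 * (n + 1) + 1) :
    frameVec n w i = (frame w).getD i false := by
  rw [frameVec, Fin.val_natCast, Nat.mod_eq_of_lt hi]

theorem getD_frame_fst (w : List (Bool × Bool)) {i : ℕ} (hi : i < w.length) :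
    (frame w).getD (i + 1) false = w[i].1 := by
  rw [frame, List.getD_eq_getElem?_getD, List.append_assoc,
    List.getElem?_append_left (by simp; omega)]
  simp [hi]

theorem getD_frame_snd (w : List (Bool × Bool)) {i : ℕ} (hi : i < w.length) :
    (frame w).getD (i + 1 + (w.length + 1)) false = w[i].2 := by
  rw [frame, List.getD_eq_getElem?_getD, List.append_assoc,
    List.getElem?_append_right (by simp)]
  simp [List.getElem?_append_left, hi]

theorem getD_frame_mid (w : List (Bool × Bool)) : (frame w).getD (w.length + 1) false = false := by
  rw [frame, List.getD_eq_getElem?_getD, List.append_assoc,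
    List.getElem?_append_right (by simp)]
  simp

theorem getD_frame_last (w : List (Bool × Bool)) :
    (frame w).getD (2 * (w.length + 1)) false = true := by
  rw [frame, List.getD_eq_getElem?_getD, List.getElem?_append_right (by simp; omega)]
  simp [show 2 * (w.length + 1) - (w.length + (w.length + 1) + 1) = 0 by omega]

open Fin.NatCast in
theorem sum_Icc_dyckWt_frameVec {n : ℕ} {w : List (Bool × Bool)} (hw : w.length = n) {j : ℕ}
    (hj : j ≤ n) :
    ∑ i ∈ Finset.Icc 1 j, dyckWt (frameVec n w ((i : ℕ) : Fin (2 * (n + 1) + 1)))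
        (frameVec n w ((i + (n + 1) : ℕ) : Fin (2 * (n + 1) + 1))) =
      ((w.take j).map (Function.uncurry dyckWt)).sum := by
  subst hw
  induction j with
  | zero => simp
  | succ j ih =>
    rw [Finset.sum_Icc_succ_top (by omega), ih (by omega), List.map_take, List.map_take,
      List.sum_take_succ _ _ (by simpa using hj), frameVec_natCast _ (by omega),
      frameVec_natCast _ (by omega), getD_frame_fst _ hj, getD_frame_snd _ hj, List.getElem_map]
    rfl

theorem count_true_frame (w : List (Bool × Bool)) :
    (frame w).count true = (w.map Prod.fst).count true + (w.map Prod.snd).count true + 2 := by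
  simp only [frame, List.count_append, List.count_cons, List.count_nil]
  grind

theorem frameVec_mem_Tset {n : ℕ} {w : List (Bool × Bool)} (hw : w.length = n)
    (hdyck : IsWeightedDyck (Function.uncurry dyckWt) w) : frameVec n w ∈ Tset (n + 1) := by
  have hcount (b : Bool) :
      (Finset.univ.filter fun i => frameVec n w i = b).card = (frame w).count b := by
    rw [← List.count_ofFn_eq_card_filter, ofFn_frameVec hw]
  have htrue : (frame w).count true = n + 2 := by
    have := count_true_fst_add_snd w
    rw [hdyck.2, hw] at this
    rw [count_true_frame]
    omega
  have hfalse : (frame w).count false = n + 1 := by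
    have := List.count_true_add_count_false (frame w)
    rw [length_frame, htrue, hw] at this
    omega
  subst hw
  refine ⟨by rw [hcount, htrue], by rw [hcount, hfalse], ?_, ?_, ?_, fun j hj => ?_, ?_⟩
  · rw [frameVec_natCast _ (by omega)]
    rfl
  · rw [frameVec_natCast _ (by omega), getD_frame_last]
  · rw [frameVec_natCast _ (by omega), getD_frame_mid]
  · rw [sum_Icc_dyckWt_frameVec rfl (by simpa using (Finset.mem_Icc.mp hj).2)]
    exact hdyck.1 j
  · rw [Nat.add_sub_cancel, sum_Icc_dyckWt_frameVec rfl le_rfl, List.take_length]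
    exact hdyck.2

def selector {m : ℕ} (s : Finset (Fin m)) : List Bool :=
  List.ofFn fun i => decide (i ∈ s)

theorem count_true_selector {m : ℕ} (s : Finset (Fin m)) : (selector s).count true = s.card := by
  simp [selector, List.count_ofFn_eq_card_filter]

theorem count_false_selector {m : ℕ} (s : Finset (Fin m)) :
    (selector s).count false = m - s.card := by
  have := List.count_true_add_count_false (selector s)
  rw [count_true_selector, selector, List.length_ofFn] at this
  rw [selector]
  omega

theorem selector_injective (m : ℕ) : Function.Injective (selector (m := m)) := by
  intro s s' h
  ext i
  simpa using congrFun (List.ofFn_injective h) i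

abbrev RiffleData (k : ℕ) : Type :=
  {p : DyckWord // p.semilength = k} × {s : Finset (Fin (4 * k)) // s.card = 2 * k} ×
    (Fin (2 * k) → Bool)

namespace RiffleData

variable {k : ℕ}

def word : RiffleData k → List (Bool × Bool)
  | ⟨⟨p, _⟩, ⟨s, _⟩, g⟩ =>
    riffle (selector s) ((List.ofFn g).map mixedPair) (p.toList.map DyckStep.toPair)

theorem count_selector (p : {p : DyckWord // p.semilength = k})
    (s : {s : Finset (Fin (4 * k)) // s.card = 2 * k}) (g : Fin (2 * k) → Bool) :
    (selector s.1).count true = ((List.ofFn g).map mixedPair).length ∧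
      (selector s.1).count false = (p.1.toList.map DyckStep.toPair).length := by
  rw [count_true_selector, count_false_selector, s.2, List.length_map, List.length_ofFn,
    List.length_map, DyckWord.length_toList_eq p.2]
  omega

theorem length_word : ∀ t : RiffleData k, t.word.length = 4 * k
  | ⟨p, s, g⟩ => by
    obtain ⟨htrue, hfalse⟩ := count_selector p s g
    rw [word, (riffle_perm_append htrue hfalse).length_eq, List.length_append, List.length_map,
      List.length_ofFn, List.length_map, DyckWord.length_toList_eq p.2]
    omega

theorem isWeightedDyck_word :
    ∀ t : RiffleData k, IsWeightedDyck (Function.uncurry dyckWt) t.word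
  | ⟨p, s, g⟩ => by
    obtain ⟨htrue, hfalse⟩ := count_selector p s g
    refine p.1.isWeightedDyck_toPair.riffle (fun x hx => ?_) htrue hfalse
    obtain ⟨b, -, rfl⟩ := List.mem_map.mp hx
    exact dyckWt_mixedPair b

theorem word_decode : ∀ t : RiffleData k,
    t.word.map isMixed = selector t.2.1.1 ∧
      t.word.filter isMixed = (List.ofFn t.2.2).map mixedPair ∧
      t.word.filter (fun x => !isMixed x) = t.1.1.toList.map DyckStep.toPair
  | ⟨p, s, g⟩ => by
    obtain ⟨htrue, hfalse⟩ := count_selector p s g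
    have hxs : ∀ x ∈ (List.ofFn g).map mixedPair, isMixed x = true := by
      simp [isMixed_mixedPair]
    have hys : ∀ y ∈ p.1.toList.map DyckStep.toPair, isMixed y = false := by
      simp [isMixed_toPair]
    refine ⟨map_riffle hxs hys htrue.le hfalse.le, ?_, ?_⟩
    · rw [word, filter_riffle hxs hys htrue.le hfalse.le, htrue, List.take_length]
    · rw [word, filter_not_riffle hxs hys htrue.le hfalse.le, hfalse, List.take_length]

theorem word_injective : Function.Injective (word (k := k)) := by
  rintro ⟨p, s, g⟩ ⟨p', s', g'⟩ h
  obtain ⟨hs, hg, hp⟩ := word_decode ⟨p, s, g⟩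
  obtain ⟨hs', hg', hp'⟩ := word_decode ⟨p', s', g'⟩
  rw [h] at hs hg hp
  have hs : s = s' := Subtype.ext (selector_injective _ (hs.symm.trans hs'))
  have hg : g = g' :=
    List.ofFn_injective (List.map_injective_iff.mpr mixedPair_injective (hg.symm.trans hg'))
  have hp : p = p' := Subtype.ext <| DyckWord.ext <|
    List.map_injective_iff.mpr DyckStep.toPair_injective (hp.symm.trans hp')
  rw [hs, hg, hp]

end RiffleData

theorem T_card_lower_general (k : ℕ) :
    catalan k * Nat.choose (4 * k) (2 * k) * 2 ^ (2 * k) ≤ (Tset (4 * k + 1)).ncard := by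
  have hcard :
      Nat.card (RiffleData k) = catalan k * Nat.choose (4 * k) (2 * k) * 2 ^ (2 * k) := by
    rw [Nat.card_eq_fintype_card, Fintype.card_prod, Fintype.card_prod,
      DyckWord.card_dyckWord_semilength_eq_catalan, Fintype.card_finset_len, Fintype.card_fun,
      Fintype.card_fin, Fintype.card_fin, Fintype.card_bool, mul_assoc]
  rw [← hcard, ← Set.ncard_univ]
  exact Set.ncard_le_ncard_of_injOn (fun t => frameVec (4 * k) t.word)
    (fun t _ => frameVec_mem_Tset t.length_word t.isWeightedDyck_word)
    (fun t _ t' _ h =>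
      RiffleData.word_injective (eq_of_frameVec_eq t.length_word t'.length_word h))
    (Set.toFinite _)

/-- For `r = 4k+1`, `|T_r| ≥ Catalan(k)·C(4k,2k)·2^{2k}`. -/
theorem T_card_lower (k : ℕ) (hk : 0 < k) :
    catalan k * Nat.choose (4 * k) (2 * k) * 2 ^ (2 * k) ≤ (Tset (4 * k + 1)).ncard :=
  T_card_lower_general k
end

section
/- Let v ∈ T_r and initialize a block of 2r+1 consecutive vertices of C_n(r) (n > 2(2r+1)) with the word v (1 = active, 0 = passive), the other vertices being arbitrary. If the strict majority update is applied successively to the vertices of the block at positions r, r+1, …, 2r−1 (relative to the start of the block), then after this sequence of updates all vertices of the block at positions r through 2r are active. -/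
open Finset


/-- Number of active neighbors of vertex `i` in the ring `C_n(r)`.
For `n > 2r+1` the `2r` offsets `±1, …, ±r` give pairwise distinct neighbors. -/
def activeNbrs (n r : ℕ) (σ : ZMod n → Bool) (i : ZMod n) : ℕ :=
  ∑ k ∈ Finset.Icc 1 r,
    ((if σ (i + (k : ZMod n)) then 1 else 0) + (if σ (i - (k : ZMod n)) then 1 else 0))

/-- One synchronous step of strict majority bootstrap percolation on `C_n(r)`:
a passive vertex (degree `2r`) becomes active iff at least `r+1 = ⌈(2r+1)/2⌉`
of its neighbors are active; active vertices stay active. -/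
def ringStep (n r : ℕ) (σ : ZMod n → Bool) : ZMod n → Bool :=
  fun i => σ i || decide (r + 1 ≤ activeNbrs n r σ i)

/-- The fixed point of strict MBP on `C_n(r)`; `n` monotone steps suffice to stabilize. -/
def ringFix (n r : ℕ) (σ : ZMod n → Bool) : ZMod n → Bool :=
  (ringStep n r)^[n] σ

/-- Probability of an event under i.i.d. Bernoulli(`p`) initial states. -/
noncomputable def pr {V : Type} [Fintype V] [DecidableEq V] (p : ℝ) (S : Set (V → Bool)) : ℝ :=
  ∑ σ : V → Bool, S.indicator (fun τ => ∏ v, (if τ v then p else 1 - p)) σ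

/-- Expectation of a random variable under i.i.d. Bernoulli(`p`) initial states. -/
noncomputable def expec {V : Type} [Fintype V] [DecidableEq V]
    (p : ℝ) (f : (V → Bool) → ℝ) : ℝ :=
  ∑ σ : V → Bool, f σ * ∏ v, (if σ v then p else 1 - p)

/-- `E_p[X_0(n,r)]`: probability that vertex `0` is active at the fixed point. -/
noncomputable def Ex (r : ℕ) (p : ℝ) (n : ℕ) : ℝ :=
  if h : n = 0 then 0 else
    haveI : NeZero n := ⟨h⟩
    pr p {σ : ZMod n → Bool | ringFix n r σ 0 = true}

/-- `p_R(n,r,p)`: probability that strictly more than half of the `n` vertices are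
active at the fixed point of strict MBP on `C_n(r)`. -/
noncomputable def pR (r : ℕ) (p : ℝ) (n : ℕ) : ℝ :=
  if h : n = 0 then 0 else
    haveI : NeZero n := ⟨h⟩
    pr p {σ : ZMod n → Bool |
      n < 2 * (Finset.univ.filter (fun i : ZMod n => ringFix n r σ i = true)).card}

/-- `W_{ℓ,r}`: the set of 0-1 words of length `ℓ` containing `r+1` consecutive `0`s. -/
def Wword (ℓ r : ℕ) : Set (Fin ℓ → Bool) :=
  {v | ∃ i : ℕ, ∃ h : i + (r + 1) ≤ ℓ, ∀ j : ℕ, ∀ hj : j < r + 1,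
    v ⟨i + j, by omega⟩ = false}

/-- `S_{ℓ,r}`: the set of 0-1 words of length `ℓ` with no `r+1` consecutive `0`s such that,
when a block of `ℓ` consecutive vertices of the ring `C_n(r)` is initialized with the word,
then whatever the initial states of the remaining vertices, all vertices of the block are
active at the fixed point of strict MBP. -/
def Sspread (ℓ r : ℕ) : Set (Fin ℓ → Bool) :=
  {v | v ∉ Wword ℓ r ∧
    ∀ n : ℕ, 2 * r + 1 < n → ℓ ≤ n → ∀ c : ZMod n, ∀ σ : ZMod n → Bool,
      (∀ i : Fin ℓ, σ (c + ((i : ℕ) : ZMod n)) = v i) →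
      ∀ i : Fin ℓ, ringFix n r σ (c + ((i : ℕ) : ZMod n)) = true}

/-- Strict majority update applied to the single vertex `i` of `C_n(r)`. -/
def updAt (n r : ℕ) (σ : ZMod n → Bool) (i : ZMod n) : ZMod n → Bool :=
  fun j => if j = i then σ i || decide (r + 1 ≤ activeNbrs n r σ i) else σ j

/-- Apply the strict majority update successively (in this order) to the vertices
`c + r, c + r + 1, …, c + 2r − 1` of `C_n(r)`. -/
def seqUpd (n r : ℕ) (c : ZMod n) (σ : ZMod n → Bool) : ZMod n → Bool :=
  (List.range r).foldl (fun τ k => updAt n r τ (c + ((r + k : ℕ) : ZMod n))) σ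


/-!
When the sweep reaches position `r + j` of the block (`j < r`), the positions `r, …, r + j - 1`
have just been activated and every initially active vertex of the block is still active, so
`r + j` sees at least `j` active neighbours plus the ones of `v` in `[j, r)` and `(r + j, 2r]`.
If `v_{r+j} = 0`, every other one of `v` lies in `[0, j) ∪ [r, r + j)`; since
`ω(v_i, v_{i+r}) = 1 - v_i - v_{i+r}` and `v_r = 0`, the Dyck condition on `w_1 ⋯ w_{j-1}` bounds
their number by `j`, and the `r + 1` ones of `v` give `r + j` at least `r + 1` active neighbours.
-/

def partialSweep (n r : ℕ) (c : ZMod n) (σ : ZMod n → Bool) : ℕ → ZMod n → Bool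
  | 0 => σ
  | k + 1 => updAt n r (partialSweep n r c σ k) (c + ((r + k : ℕ) : ZMod n))

section Sweep

variable {n r : ℕ}

theorem seqUpd_eq_partialSweep (c : ZMod n) (σ : ZMod n → Bool) :
    seqUpd n r c σ = partialSweep n r c σ r := by
  suffices ∀ k, (List.range k).foldl
      (fun τ m => updAt n r τ (c + ((r + m : ℕ) : ZMod n))) σ = partialSweep n r c σ k from
    this r
  intro k
  induction k with
  | zero => rfl
  | succ k ih => rw [List.range_succ, List.foldl_append, ih]; rfl

theorem updAt_of_active {τ : ZMod n → Bool} {i j : ZMod n} (h : τ j = true) :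
    updAt n r τ i j = true := by
  unfold updAt
  split_ifs with hji
  · simp [← hji, h]
  · exact h

theorem updAt_self_of_le {τ : ZMod n → Bool} {i : ZMod n} (h : r + 1 ≤ activeNbrs n r τ i) :
    updAt n r τ i i = true := by
  simp [updAt, h]

theorem partialSweep_mono {c : ZMod n} {σ : ZMod n → Bool} {j : ZMod n} {k l : ℕ}
    (hkl : k ≤ l)
    (h : partialSweep n r c σ k j = true) : partialSweep n r c σ l j = true := by
  induction l, hkl using Nat.le_induction with
  | base => exact h
  | succ l _ ih => exact updAt_of_active ih

theorem activeNbrs_add_natCast (τ : ZMod n → Bool) (c : ZMod n) {p : ℕ} (hp : r ≤ p) :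
    activeNbrs n r τ (c + p) = ∑ t ∈ Ico (p - r) p, (τ (c + t)).toNat +
      ∑ t ∈ Ico (p + 1) (p + r + 1), (τ (c + t)).toNat := by
  have ite_eq (b : Bool) : (if b then 1 else 0) = b.toNat := by cases b <;> rfl
  simp only [activeNbrs, ite_eq, sum_add_distrib]
  rw [add_comm]
  congr 1
  · refine sum_nbij' (p - ·) (p - ·) ?_ ?_ ?_ ?_
      fun m hm => by rw [Nat.cast_sub (by rw [mem_Icc] at hm; omega), add_sub_assoc]
    all_goals (simp only [mem_Icc, mem_Ico]; intros; omega)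
  · refine sum_nbij' (p + ·) (· - p) ?_ ?_ ?_ ?_ fun m _ => by rw [Nat.cast_add, add_assoc]
    all_goals (simp only [mem_Icc, mem_Ico]; intros; omega)

theorem partialSweep_activates {c : ZMod n} {σ : ZMod n → Bool} {w : ℕ → Bool}
    (hσ : ∀ t ≤ 2 * r, σ (c + t) = w t)
    (hcount : ∀ j < r, w (r + j) = false →
      r + 1 ≤ j + ∑ t ∈ Ico j r, (w t).toNat +
        ∑ t ∈ Ico (r + j + 1) (2 * r + 1), (w t).toNat) :
    ∀ k ≤ r, ∀ j < k, partialSweep n r c σ k (c + (r + j : ℕ)) = true := by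
  intro k
  induction k with
  | zero => intros; omega
  | succ k ih =>
    intro hk j hj
    obtain hj | rfl := Nat.lt_succ_iff_lt_or_eq.mp hj
    · exact partialSweep_mono k.le_succ (ih (by omega) j hj)
    set τ := partialSweep n r c σ j
    have initial (t : ℕ) (ht : t ≤ 2 * r) (hw : w t = true) : τ (c + t) = true :=
      partialSweep_mono j.zero_le ((hσ t ht).trans hw)
    cases hwk : w (r + j)
    · have swept : ∑ t ∈ Ico r (r + j), (τ (c + t)).toNat = j := by
        rw [sum_congr rfl fun t ht => ?_, sum_const, Nat.card_Ico, smul_eq_mul, mul_one]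
        · omega
        · obtain ⟨i, rfl⟩ := Nat.exists_eq_add_of_le (mem_Ico.1 ht).1
          rw [ih (by omega) i (by have := mem_Ico.1 ht; omega), Bool.toNat_true]
      have left : ∑ t ∈ Ico j r, (w t).toNat ≤ ∑ t ∈ Ico j r, (τ (c + t)).toNat :=
        sum_le_sum fun t ht => Bool.toNat_le_toNat (initial t (by have := mem_Ico.1 ht; omega))
      have right : ∑ t ∈ Ico (r + j + 1) (2 * r + 1), (w t).toNat ≤
          ∑ t ∈ Ico (r + j + 1) (r + j + r + 1), (τ (c + t)).toNat :=
        calc _ ≤ ∑ t ∈ Ico (r + j + 1) (2 * r + 1), (τ (c + t)).toNat :=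
              sum_le_sum fun t ht =>
                Bool.toNat_le_toNat (initial t (by have := mem_Ico.1 ht; omega))
          _ ≤ _ := sum_le_sum_of_subset (Ico_subset_Ico_right (by omega))
      apply updAt_self_of_le
      rw [activeNbrs_add_natCast τ c (by omega : r ≤ r + j), Nat.add_sub_cancel_left,
        ← sum_Ico_consecutive _ (by omega : j ≤ r) (by omega : r ≤ r + j), swept]
      linarith [hcount j (by omega) hwk]
    · exact updAt_of_active (initial _ (by omega) hwk)

end Sweep

theorem dyckWt_eq_one_sub (a b : Bool) : dyckWt a b = 1 - a.toNat - b.toNat := by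
  cases a <;> cases b <;> rfl

section Tset

open Fin.NatCast

variable {r : ℕ} {v : Fin (2 * r + 1) → Bool}

theorem Tset.sum_toNat_eq (hv : v ∈ Tset r) :
    ∑ t ∈ range (2 * r + 1), (v t).toNat = r + 1 := by
  have ite_eq (b : Bool) : b.toNat = if b = true then 1 else 0 := by cases b <;> rfl
  rw [← Fin.sum_univ_eq_sum_range, ← hv.1, card_filter]
  simp only [Fin.cast_val_eq_self, ite_eq]

theorem Tset.sum_range_toNat_le (hv : v ∈ Tset r) {j : ℕ} (hj : j ≤ r) :
    ∑ i ∈ range j, ((v i).toNat + (v (i + r : ℕ)).toNat) ≤ j := by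
  obtain ⟨-, -, -, -, hvr, hdyck, -⟩ := hv
  set g : ℕ → ℕ := fun i => (v i).toNat + (v (i + r : ℕ)).toNat
  cases j with
  | zero => simp
  | succ k =>
    have prefix_le : ∑ i ∈ Icc 1 k, g i ≤ k := by
      rcases k.eq_zero_or_pos with rfl | hk
      · simp
      have weight_eq :
          ∑ i ∈ Icc 1 k, dyckWt (v i) (v (i + r : ℕ)) = k - ∑ i ∈ Icc 1 k, (g i : ℤ) := by
        simp only [g, dyckWt_eq_one_sub, Nat.cast_add, sum_sub_distrib, sum_add_distrib,
          sum_const, Nat.card_Icc, nsmul_eq_mul, mul_one]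
        push_cast; ring
      have := hdyck k (mem_Icc.2 ⟨hk, by omega⟩)
      rw [weight_eq] at this
      exact_mod_cast (sub_nonneg.1 this)
    have first_le : g 0 ≤ 1 := by simp [g, hvr, Bool.toNat_le]
    rw [sum_range_succ', range_eq_Ico, sum_Ico_add' g 0 k 1, zero_add, Ico_add_one_right_eq_Icc]
    exact Nat.add_le_add prefix_le first_le

theorem Tset.succ_le_add_sum_toNat (hv : v ∈ Tset r) {j : ℕ} (hj : j < r)
    (hvj : v (r + j : ℕ) = false) :
    r + 1 ≤ j + ∑ t ∈ Ico j r, (v t).toNat +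
      ∑ t ∈ Ico (r + j + 1) (2 * r + 1), (v t).toNat := by
  set o : ℕ → ℕ := fun t => (v t).toNat
  have total : ∑ t ∈ range (2 * r + 1), o t = r + 1 := Tset.sum_toNat_eq hv
  have unseen : ∑ t ∈ range j, o t + ∑ t ∈ Ico r (r + j), o t ≤ j := by
    have shift : ∑ t ∈ Ico r (r + j), o t = ∑ i ∈ range j, o (i + r) := by
      rw [range_eq_Ico, sum_Ico_add', zero_add, add_comm]
    rw [shift, ← sum_add_distrib]
    exact Tset.sum_range_toNat_le hv hj.le
  have split : ∑ t ∈ range (2 * r + 1), o t = ∑ t ∈ range j, o t + ∑ t ∈ Ico j r, o t +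
      ∑ t ∈ Ico r (r + j), o t + o (r + j) + ∑ t ∈ Ico (r + j + 1) (2 * r + 1), o t := by
    rw [range_eq_Ico, range_eq_Ico, sum_Ico_consecutive o j.zero_le hj.le,
      sum_Ico_consecutive o r.zero_le (r.le_add_right j), ← sum_Ico_succ_top (r + j).zero_le,
      sum_Ico_consecutive o (r + j + 1).zero_le (by omega)]
  have hoj : o (r + j) = 0 := by simp only [o, hvj, Bool.toNat_false]
  show r + 1 ≤ j + ∑ t ∈ Ico j r, o t + ∑ t ∈ Ico (r + j + 1) (2 * r + 1), o t
  omega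

end Tset

theorem sweep_activates_block_general (r n : ℕ)
    (v : Fin (2 * r + 1) → Bool) (hv : v ∈ Tset r) (c : ZMod n) (σ : ZMod n → Bool)
    (hσ : ∀ i : Fin (2 * r + 1), σ (c + ((i : ℕ) : ZMod n)) = v i) :
    ∀ i : ℕ, r ≤ i → i ≤ 2 * r → seqUpd n r c σ (c + ((i : ℕ) : ZMod n)) = true := by
  open Fin.NatCast in
  have hσ' : ∀ t ≤ 2 * r, σ (c + t) = v t := fun t ht => by
    simpa [Fin.val_cast_of_lt (by omega : t < 2 * r + 1)] using hσ t
  have swept := partialSweep_activates hσ' fun j hj hvj => Tset.succ_le_add_sum_toNat hv hj hvj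
  obtain ⟨-, -, -, hv_last, -⟩ := hv
  intro i hri hi
  rw [seqUpd_eq_partialSweep]
  obtain hi | rfl := hi.lt_or_eq
  · simpa [Nat.add_sub_cancel' hri] using swept r le_rfl (i - r) (by omega)
  · exact partialSweep_mono r.zero_le ((hσ' _ le_rfl).trans hv_last)

/-- If a block of `2r+1` consecutive vertices of `C_n(r)` (starting at `c`, with
`n > 2(2r+1)`) is initialized with a word `v ∈ T_r` and the strict majority update is
applied successively to the block vertices at relative positions `r, r+1, …, 2r−1`, then
afterwards all block vertices at relative positions `r` through `2r` are active. -/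
theorem sweep_activates_block (r n : ℕ) (hr : 0 < r) (hn : 2 * (2 * r + 1) < n)
    (v : Fin (2 * r + 1) → Bool) (hv : v ∈ Tset r) (c : ZMod n) (σ : ZMod n → Bool)
    (hσ : ∀ i : Fin (2 * r + 1), σ (c + ((i : ℕ) : ZMod n)) = v i) :
    ∀ i : ℕ, r ≤ i → i ≤ 2 * r → seqUpd n r c σ (c + ((i : ℕ) : ZMod n)) = true :=
  sweep_activates_block_general r n v hv c σ hσ
end
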